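/- Let F_𝔽(x,y) = |⟨x,y⟩_𝔽|² on S^{(n+1)d−1} × S^{(n+1)d−1}, where 𝔽 ∈ {ℝ, ℂ, ℍ}, d = dim_ℝ 𝔽, and ⟨x,y⟩_𝔽 = Σᵢ x̄ᵢyᵢ for x, y ∈ 𝔽^{n+1}. Then the gradient of F_𝔽 in the product metric satisfies |∇F_𝔽|² = 8F_𝔽(1 − F_𝔽), and the Laplacian satisfies ΔF_𝔽 = 4d(1 − (n+1)F_𝔽). -/

import Mathlib

/-- Tangential (spherical) gradient: projection of the ambient gradient onto the tangent
space of the unit sphere at `x`. -/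
noncomputable def sGrad {V : Type*} [NormedAddCommGroup V] [InnerProductSpace ℝ V]
    [CompleteSpace V] (g : V → ℝ) (x : V) : V :=
  gradient g x - (inner ℝ (gradient g x) x : ℝ) • x

/-- Laplace–Beltrami operator of the unit sphere of dimension `ν` in the ambient inner
product space `V`, expressed through ambient derivatives:
`Δ_S g = Δ g − Hess g(x,x) − ν ∂_x g` at a point `x` of the unit sphere. -/
noncomputable def sLap {V : Type*} [NormedAddCommGroup V] [InnerProductSpace ℝ V]
    [FiniteDimensional ℝ V] (ν : ℕ) (g : V → ℝ) (x : V) : ℝ :=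
  (∑ i, fderiv ℝ (fun z => fderiv ℝ g z (stdOrthonormalBasis ℝ V i)) x
      (stdOrthonormalBasis ℝ V i))
    - fderiv ℝ (fun z => fderiv ℝ g z x) x x - (ν : ℝ) * fderiv ℝ g x x

/-- `F_𝔽(x,y) = |⟨x,y⟩_𝔽|²` with `⟨x,y⟩_𝔽 = Σᵢ x̄ᵢ yᵢ`. -/
noncomputable def hermF {𝔽 : Type*} [NormedDivisionRing 𝔽] [StarRing 𝔽] (n : ℕ)
    (x y : PiLp 2 (fun _ : Fin (n + 1) => 𝔽)) : ℝ :=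
  ‖∑ i, star (x i) * y i‖ ^ 2

open scoped RealInnerProductSpace

set_option linter.unusedSectionVars false

section AuxGen
variable {V W : Type*} [NormedAddCommGroup V] [InnerProductSpace ℝ V] [FiniteDimensional ℝ V]
  [NormedAddCommGroup W] [InnerProductSpace ℝ W] [FiniteDimensional ℝ W]

lemma quad_hasFDerivAt (S : V →L[ℝ] W) (z : V) :
    HasFDerivAt (fun v => ‖S v‖ ^ 2) ((2 : ℝ) • ((innerSL ℝ (S z)).comp S)) z := by
  have h := (S.hasFDerivAt (x := z)).inner ℝ (S.hasFDerivAt (x := z))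
  have he : (fun v => ‖S v‖ ^ 2) = fun v => ⟪S v, S v⟫ := by
    funext v; rw [real_inner_self_eq_norm_sq]
  rw [he]
  refine h.congr_fderiv ?_
  ext v
  simp [real_inner_comm, two_mul]

lemma quad_fderiv (S : V →L[ℝ] W) (z v : V) :
    fderiv ℝ (fun w => ‖S w‖ ^ 2) z v = 2 * ⟪S z, S v⟫ := by
  rw [(quad_hasFDerivAt S z).fderiv]
  simp

lemma quad_fderiv2 (S : V →L[ℝ] W) (w x u : V) :
    fderiv ℝ (fun z => fderiv ℝ (fun v => ‖S v‖ ^ 2) z w) x u = 2 * ⟪S w, S u⟫ := by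
  have h : (fun z => fderiv ℝ (fun v => ‖S v‖ ^ 2) z w)
      = ((2 : ℝ) • ((innerSL ℝ (S w)).comp S) : V →L[ℝ] ℝ) := by
    funext z
    rw [quad_fderiv]
    simp [real_inner_comm]
  rw [h, ContinuousLinearMap.fderiv]
  simp

lemma quad_gradient (S : V →L[ℝ] W) (A : W →L[ℝ] V)
    (hadj : ∀ c v, ⟪c, S v⟫ = ⟪A c, v⟫) (x : V) :
    gradient (fun v => ‖S v‖ ^ 2) x = (2 : ℝ) • A (S x) := by
  have h : HasGradientAt (fun v => ‖S v‖ ^ 2) ((2 : ℝ) • A (S x)) x := by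
    rw [hasGradientAt_iff_hasFDerivAt]
    refine (quad_hasFDerivAt S x).congr_fderiv ?_
    ext v
    simp [real_inner_smul_left, hadj (S x) v]
  exact h.gradient

lemma quad_sum_basis (S : V →L[ℝ] W) (A : W →L[ℝ] V)
    (hadj : ∀ c v, ⟪c, S v⟫ = ⟪A c, v⟫) (hA : ∀ c, ‖A c‖ = ‖c‖) :
    ∑ i, ‖S (stdOrthonormalBasis ℝ V i)‖ ^ 2 = (Module.finrank ℝ W : ℝ) := by
  set e := stdOrthonormalBasis ℝ V with he
  set b := stdOrthonormalBasis ℝ W with hb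
  calc ∑ i, ‖S (e i)‖ ^ 2 = ∑ i, ∑ j, ⟪S (e i), b j⟫ * ⟪b j, S (e i)⟫ := by
        simp_rw [b.sum_inner_mul_inner, real_inner_self_eq_norm_sq]
    _ = ∑ j, ∑ i, ⟪A (b j), e i⟫ * ⟪e i, A (b j)⟫ := by
        rw [Finset.sum_comm]
        refine Finset.sum_congr rfl fun j _ => Finset.sum_congr rfl fun i _ => ?_
        have t1 : ⟪S (e i), b j⟫ = ⟪A (b j), e i⟫ := by
          rw [real_inner_comm]; exact hadj _ _
        have t2 : ⟪e i, A (b j)⟫ = ⟪A (b j), e i⟫ := real_inner_comm _ _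
        rw [t1, t2, hadj]
    _ = ∑ j, ‖A (b j)‖ ^ 2 := by
        simp_rw [e.sum_inner_mul_inner, real_inner_self_eq_norm_sq]
    _ = ∑ _j : Fin (Module.finrank ℝ W), (1 : ℝ) := by
        refine Finset.sum_congr rfl fun j _ => ?_
        rw [hA, b.orthonormal.1 j, one_pow]
    _ = (Module.finrank ℝ W : ℝ) := by simp

lemma quad_main (S : V →L[ℝ] W) (A : W →L[ℝ] V)
    (hadj : ∀ c v, ⟪c, S v⟫ = ⟪A c, v⟫) (hA : ∀ c, ‖A c‖ = ‖c‖)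
    (x : V) (hx : ‖x‖ = 1) (ν : ℕ) :
    ‖sGrad (fun v => ‖S v‖ ^ 2) x‖ ^ 2 = 4 * ‖S x‖ ^ 2 - 4 * (‖S x‖ ^ 2) ^ 2 ∧
    sLap ν (fun v => ‖S v‖ ^ 2) x
      = 2 * (Module.finrank ℝ W : ℝ) - 2 * ‖S x‖ ^ 2 - 2 * (ν : ℝ) * ‖S x‖ ^ 2 := by
  have hAx : ⟪A (S x), x⟫ = ‖S x‖ ^ 2 := by
    rw [← hadj, real_inner_self_eq_norm_sq]
  constructor
  · unfold sGrad
    rw [quad_gradient S A hadj x]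
    rw [real_inner_smul_left, hAx]
    rw [norm_sub_sq_real]
    rw [norm_smul, norm_smul, real_inner_smul_left, real_inner_smul_right, hAx, hx, hA]
    rw [Real.norm_eq_abs, Real.norm_eq_abs,
      abs_of_nonneg (by positivity : (0:ℝ) ≤ 2 * ‖S x‖ ^ 2),
      abs_of_nonneg (by norm_num : (0:ℝ) ≤ 2)]
    ring
  · unfold sLap
    have h2 : ∀ w : V, fderiv ℝ (fun z => fderiv ℝ (fun v => ‖S v‖ ^ 2) z w) x w
        = 2 * ‖S w‖ ^ 2 := fun w => by
      rw [quad_fderiv2, real_inner_self_eq_norm_sq]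
    have h3 : fderiv ℝ (fun v => ‖S v‖ ^ 2) x x = 2 * ‖S x‖ ^ 2 := by
      rw [quad_fderiv, real_inner_self_eq_norm_sq]
    simp_rw [h2, h3]
    rw [← Finset.mul_sum, quad_sum_basis S A hadj hA]
    ring

end AuxGen

section AuxF
variable {𝔽 : Type*} [NormedDivisionRing 𝔽] [StarRing 𝔽] [NormedStarGroup 𝔽]
  [NormedAlgebra ℝ 𝔽] [InnerProductSpace ℝ 𝔽]

lemma star_algebraMap_real (r : ℝ)
    (hstar : ∀ b : 𝔽, star b * b = algebraMap ℝ 𝔽 (‖b‖ ^ 2)) :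
    star (algebraMap ℝ 𝔽 r) = algebraMap ℝ 𝔽 r := by
  rcases eq_or_ne r 0 with h | h
  · simp [h]
  · have h0 : algebraMap ℝ 𝔽 r ≠ 0 := by
      simpa using (map_ne_zero_iff _ (algebraMap ℝ 𝔽).injective).mpr h
    have h1 := hstar (algebraMap ℝ 𝔽 r)
    rw [norm_algebraMap'] at h1
    have h2 : algebraMap ℝ 𝔽 (‖r‖ ^ 2) = algebraMap ℝ 𝔽 r * algebraMap ℝ 𝔽 r := by
      rw [← map_mul]
      congr 1
      rw [Real.norm_eq_abs, sq_abs, sq]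
    rw [h2] at h1
    exact mul_right_cancel₀ h0 h1

lemma star_smul_real (r : ℝ) (a : 𝔽)
    (hstar : ∀ b : 𝔽, star b * b = algebraMap ℝ 𝔽 (‖b‖ ^ 2)) :
    star (r • a) = r • star a := by
  rw [Algebra.smul_def, Algebra.smul_def, star_mul, star_algebraMap_real r hstar,
    ← Algebra.commutes]

lemma polar_eq (a b : 𝔽)
    (hstar : ∀ b : 𝔽, star b * b = algebraMap ℝ 𝔽 (‖b‖ ^ 2)) :
    star a * b + star b * a = algebraMap ℝ 𝔽 (2 * ⟪a, b⟫) := by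
  have key : algebraMap ℝ 𝔽 (‖a + b‖ ^ 2)
      = algebraMap ℝ 𝔽 (‖a‖ ^ 2) + (star a * b + star b * a)
        + algebraMap ℝ 𝔽 (‖b‖ ^ 2) := by
    rw [← hstar a, ← hstar b, ← hstar (a + b), star_add]
    noncomm_ring
  rw [norm_add_sq_real, map_add, map_add] at key
  exact (add_left_cancel (add_right_cancel key)).symm

lemma inner_mul_move (a b c : 𝔽)
    (hstar : ∀ b : 𝔽, star b * b = algebraMap ℝ 𝔽 (‖b‖ ^ 2)) :
    ⟪a, b * c⟫ = ⟪star b * a, c⟫ := by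
  have hinj := (algebraMap ℝ 𝔽).injective
  have h1 := polar_eq a (b * c) hstar
  have h2 := polar_eq (star b * a) c hstar
  have : star a * (b * c) + star (b * c) * a
      = star (star b * a) * c + star c * (star b * a) := by
    rw [star_mul, star_mul, star_star]
    noncomm_ring
  rw [h1, h2] at this
  have := hinj this
  linarith

lemma inner_star_star (a b : 𝔽) : ⟪star a, star b⟫ = ⟪a, b⟫ := by
  have h : ∀ u v : 𝔽, ⟪u, v⟫ = (‖u + v‖ ^ 2 - ‖u‖ ^ 2 - ‖v‖ ^ 2) / 2 := by
    intro u v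
    rw [norm_add_sq_real]
    ring
  rw [h, h, ← star_add, norm_star, norm_star, norm_star]

lemma inner_star_move (a b c : 𝔽)
    (hstar : ∀ b : 𝔽, star b * b = algebraMap ℝ 𝔽 (‖b‖ ^ 2)) :
    ⟪a, star b * c⟫ = ⟪c * star a, b⟫ := by
  rw [← inner_star_star a (star b * c), star_mul, star_star]
  rw [inner_mul_move _ _ _ hstar, star_star]

end AuxF

/-- On the product of two unit spheres in `𝔽^{n+1}` (`𝔽 = ℝ, ℂ, ℍ`, `d = dim_ℝ 𝔽`), the
function `F_𝔽 = |⟨x,y⟩_𝔽|²` satisfies `|∇F_𝔽|² = 8F_𝔽(1 − F_𝔽)` and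
`ΔF_𝔽 = 4d(1 − (n+1)F_𝔽)`. -/
theorem stmt_8 {𝔽 : Type*} [NormedDivisionRing 𝔽] [StarRing 𝔽] [NormedStarGroup 𝔽]
    [NormedAlgebra ℝ 𝔽] [InnerProductSpace ℝ 𝔽] [FiniteDimensional ℝ 𝔽]
    (hstar : ∀ b : 𝔽, star b * b = algebraMap ℝ 𝔽 (‖b‖ ^ 2))
    (n d : ℕ) (hd : Module.finrank ℝ 𝔽 = d) (hd' : d = 1 ∨ d = 2 ∨ d = 4)
    (x y : PiLp 2 (fun _ : Fin (n + 1) => 𝔽)) (hx : ‖x‖ = 1) (hy : ‖y‖ = 1) :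
    ‖sGrad (fun x' => hermF n x' y) x‖ ^ 2 + ‖sGrad (fun y' => hermF n x y') y‖ ^ 2
        = 8 * hermF n x y * (1 - hermF n x y) ∧
      sLap ((n + 1) * d - 1) (fun x' => hermF n x' y) x
          + sLap ((n + 1) * d - 1) (fun y' => hermF n x y') y
        = 4 * (d : ℝ) * (1 - ((n : ℝ) + 1) * hermF n x y) := by
  classical
  have coordsum : ∀ z : PiLp 2 (fun _ : Fin (n + 1) => 𝔽), ‖z‖ = 1 →
      ∑ i, ‖z i‖ ^ 2 = 1 := by
    intro z hz
    have h := real_inner_self_eq_norm_sq z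
    rw [hz, one_pow, PiLp.inner_apply] at h
    simp_rw [real_inner_self_eq_norm_sq] at h
    exact h
  have hx2 := coordsum x hx
  have hy2 := coordsum y hy
  -- the two linear maps and their adjoints
  obtain ⟨S1, hS1⟩ : ∃ S : PiLp 2 (fun _ : Fin (n + 1) => 𝔽) →L[ℝ] 𝔽,
      ∀ v, S v = ∑ i, star (v i) * y i := by
    refine ⟨AddMonoidHom.toRealLinearMap
      { toFun := fun v => ∑ i, star (v i) * y i
        map_zero' := by simp
        map_add' := fun u v => by simp [star_add, add_mul, Finset.sum_add_distrib] }
      ?_, fun v => rfl⟩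
    show Continuous fun v : PiLp 2 (fun _ : Fin (n + 1) => 𝔽) =>
      ∑ i, star (v i) * y i
    exact continuous_finset_sum _ fun i _ =>
      ((PiLp.continuous_apply (p := 2) (β := fun _ => 𝔽) i).star.mul continuous_const)
  obtain ⟨S2, hS2⟩ : ∃ S : PiLp 2 (fun _ : Fin (n + 1) => 𝔽) →L[ℝ] 𝔽,
      ∀ v, S v = ∑ i, star (x i) * v i := by
    refine ⟨AddMonoidHom.toRealLinearMap
      { toFun := fun v => ∑ i, star (x i) * v i
        map_zero' := by simp
        map_add' := fun u v => by simp [mul_add, Finset.sum_add_distrib] }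
      ?_, fun v => rfl⟩
    show Continuous fun v : PiLp 2 (fun _ : Fin (n + 1) => 𝔽) =>
      ∑ i, star (x i) * v i
    exact continuous_finset_sum _ fun i _ =>
      (continuous_const.mul (PiLp.continuous_apply (p := 2) (β := fun _ => 𝔽) i))
  obtain ⟨A1, hA1⟩ : ∃ A : 𝔽 →L[ℝ] PiLp 2 (fun _ : Fin (n + 1) => 𝔽),
      ∀ c i, A c i = y i * star c := by
    refine ⟨AddMonoidHom.toRealLinearMap
      { toFun := fun c => (WithLp.equiv 2 (∀ _ : Fin (n + 1), 𝔽)).symm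
          (fun i => y i * star c)
        map_zero' := PiLp.ext fun i => by simp
        map_add' := fun c c' => PiLp.ext fun i => by simp [star_add, mul_add] }
      ((PiLp.continuous_toLp (p := 2) (β := fun _ => 𝔽)).comp (continuous_pi fun i => continuous_const.mul continuous_star)),
      fun c i => rfl⟩
  obtain ⟨A2, hA2⟩ : ∃ A : 𝔽 →L[ℝ] PiLp 2 (fun _ : Fin (n + 1) => 𝔽),
      ∀ c i, A c i = x i * c := by
    refine ⟨AddMonoidHom.toRealLinearMap
      { toFun := fun c => (WithLp.equiv 2 (∀ _ : Fin (n + 1), 𝔽)).symm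
          (fun i => x i * c)
        map_zero' := PiLp.ext fun i => by simp
        map_add' := fun c c' => PiLp.ext fun i => by simp [mul_add] }
      ((PiLp.continuous_toLp (p := 2) (β := fun _ => 𝔽)).comp (continuous_pi fun i => continuous_const.mul continuous_id)),
      fun c i => rfl⟩
  have hadj1 : ∀ (c : 𝔽) v, ⟪c, S1 v⟫ = ⟪A1 c, v⟫ := by
    intro c v
    rw [hS1, inner_sum, PiLp.inner_apply]
    exact Finset.sum_congr rfl fun i _ => by
      rw [hA1, inner_star_move _ _ _ hstar]
  have hadj2 : ∀ (c : 𝔽) v, ⟪c, S2 v⟫ = ⟪A2 c, v⟫ := by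
    intro c v
    rw [hS2, inner_sum, PiLp.inner_apply]
    exact Finset.sum_congr rfl fun i _ => by
      rw [hA2, inner_mul_move _ _ _ hstar, star_star]
  have hAnorm : ∀ (A : 𝔽 →L[ℝ] PiLp 2 (fun _ : Fin (n + 1) => 𝔽)) (c : 𝔽),
      (∑ i, ‖A c i‖ ^ 2 = ‖c‖ ^ 2) → ‖A c‖ = ‖c‖ := by
    intro A c h
    have h1 : ‖A c‖ ^ 2 = ‖c‖ ^ 2 := by
      have h2 := real_inner_self_eq_norm_sq (A c)
      rw [PiLp.inner_apply] at h2
      simp_rw [real_inner_self_eq_norm_sq] at h2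
      rw [← h2, h]
    rw [← Real.sqrt_sq (norm_nonneg (A c)), h1, Real.sqrt_sq (norm_nonneg c)]
  have hAn1 : ∀ c, ‖A1 c‖ = ‖c‖ := fun c => hAnorm A1 c (by
    simp_rw [hA1, norm_mul, norm_star, mul_pow]
    rw [← Finset.sum_mul, hy2, one_mul])
  have hAn2 : ∀ c, ‖A2 c‖ = ‖c‖ := fun c => hAnorm A2 c (by
    simp_rw [hA2, norm_mul, mul_pow]
    rw [← Finset.sum_mul, hx2, one_mul])
  have hf1 : (fun x' => hermF n x' y) = fun v => ‖S1 v‖ ^ 2 := by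
    funext v
    rw [hermF, hS1]
  have hf2 : (fun y' => hermF n x y') = fun v => ‖S2 v‖ ^ 2 := by
    funext v
    rw [hermF, hS2]
  have hxy : S2 y = S1 x := by rw [hS2 y, hS1 x]
  have hF : hermF n x y = ‖S1 x‖ ^ 2 := by rw [hermF, hS1]
  obtain ⟨g1, l1⟩ := quad_main S1 A1 hadj1 hAn1 x hx ((n + 1) * d - 1)
  obtain ⟨g2, l2⟩ := quad_main S2 A2 hadj2 hAn2 y hy ((n + 1) * d - 1)
  rw [hf1, hf2, hF]
  have hd1 : (1 : ℕ) ≤ (n + 1) * d := by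
    have hdpos : 0 < d := by rcases hd' with h | h | h <;> omega
    exact Nat.mul_pos (Nat.succ_pos n) hdpos
  have hcast : (((n + 1) * d - 1 : ℕ) : ℝ) = ((n : ℝ) + 1) * (d : ℝ) - 1 := by
    rw [Nat.cast_sub hd1]
    push_cast
    ring
  constructor
  · rw [g1, g2, hxy]
    ring
  · rw [l1, l2, hxy, hd, hcast]
    ring
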